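/- Let g₁,…,g_J (J ≥ 1) be real-valued functions on a set 𝒳. (i) If every element t of the density model S̄₀ is of the form t = exp(Σ_{j=1}^J θⱼgⱼ) with θ₁,…,θ_J∈ℝ, then the class ℱ = {ψ(√(t′/t)) : t,t′∈S̄₀} is weak VC-major with dimension at most J+1. (ii) If 𝒥=(I₁,…,I_k) is a partition of 𝒳 and every element t of S̄₀ is of the form t = Σ_{i=1}^k exp(Σ_{j=1}^J θ_{i,j}gⱼ)·1_{I_i} with θ_{i,j}∈ℝ, then ℱ is weak VC-major with dimension at most k(J+2). -/
import Mathlib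


open MeasureTheory Real Set
open scoped Classical ENNReal

noncomputable section

/-- `ψ(√(b/a))` where `ψ(x)=(x−1)/(x+1)`, `ψ(+∞)=1`, with the conventions
`a/0 = +∞` for `a>0` and `0/0 = 1`. -/
def psiR (a b : ℝ) : ℝ :=
  if a = 0 then (if b = 0 then 0 else 1)
  else (Real.sqrt (b / a) - 1) / (Real.sqrt (b / a) + 1)

/-- `t` is a probability density with respect to `ν`. -/
def IsDensity1 {X : Type*} [MeasurableSpace X] (ν : Measure X) (t : X → ℝ) : Prop :=
  Measurable t ∧ (∀ x, 0 ≤ t x) ∧ ∫⁻ x, ENNReal.ofReal (t x) ∂ν = 1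

/-- The class of sets `C` on `𝒴` is VC with dimension at most `d`. -/
def VCdimLE {𝒴 : Type*} (C : Set (Set 𝒴)) (d : ℕ) : Prop :=
  ∀ F : Finset 𝒴,
    (∀ A : Finset 𝒴, A ⊆ F → ∃ c ∈ C, ∀ y ∈ F, y ∈ c ↔ y ∈ A) → F.card ≤ d

/-- A class `ℱ` of real-valued functions on `𝒴` is weak VC-major with dimension at
most `d`. -/
def WeakVCMajorLE {𝒴 : Type*} (ℱ : Set (𝒴 → ℝ)) (d : ℕ) : Prop :=
  ∀ u : ℝ, VCdimLE {B | ∃ f ∈ ℱ, B = {y | u < f y}} d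

/-! ### Auxiliary lemmas -/

/-- Dudley's lemma: classes of positivity sets of a finite-dimensional vector space of
functions are VC of dimension at most the number of spanning functions. -/
lemma vc_linear {𝒴 ι : Type*} [Fintype ι] (φ : ι → 𝒴 → ℝ) (C : Set (Set 𝒴))
    (hC : ∀ B ∈ C, ∃ c : ι → ℝ, B = {y | 0 < ∑ i, c i * φ i y}) :
    VCdimLE C (Fintype.card ι) := by
  intro F hF
  by_contra hcard
  push_neg at hcard
  -- evaluation linear map
  let T : ({x // x ∈ F} → ℝ) →ₗ[ℝ] (ι → ℝ) :=
    { toFun := fun l i => ∑ y, l y * φ i y.1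
      map_add' := by
        intro a b; funext i
        simp [add_mul, Finset.sum_add_distrib]
      map_smul' := by
        intro r a; funext i
        simp [Finset.mul_sum, mul_assoc] }
  have hnotinj : ¬ Function.Injective T := by
    intro hinj
    have h1 := LinearMap.finrank_le_finrank_of_injective hinj
    rw [Module.finrank_fintype_fun_eq_card, Module.finrank_fintype_fun_eq_card,
      Fintype.card_coe] at h1
    omega
  rw [← LinearMap.ker_eq_bot] at hnotinj
  obtain ⟨l, hlker, hlne⟩ := Submodule.exists_mem_ne_zero_of_ne_bot hnotinj
  have hl0 : T l = 0 := hlker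
  -- key contradiction
  have key : ∀ l : {x // x ∈ F} → ℝ, T l = 0 → (∃ y, 0 < l y) → False := by
    intro l hTl ⟨y₀, hy₀⟩
    set A : Finset 𝒴 := F.filter (fun z => ∃ h : z ∈ F, 0 < l ⟨z, h⟩) with hA
    obtain ⟨c, hcC, hcmem⟩ := hF A (Finset.filter_subset _ _)
    obtain ⟨cc, hcc⟩ := hC c hcC
    have hiff : ∀ y : {x // x ∈ F}, 0 < ∑ i, cc i * φ i y.1 ↔ 0 < l y := by
      intro y
      constructor
      · intro h
        have hyc : y.1 ∈ c := by rw [hcc]; exact h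
        have := (hcmem y.1 y.2).mp hyc
        rw [hA, Finset.mem_filter] at this
        obtain ⟨-, h2, h3⟩ := this
        convert h3
      · intro h
        have hyA : y.1 ∈ A := by
          rw [hA, Finset.mem_filter]
          exact ⟨y.2, y.2, h⟩
        have := (hcmem y.1 y.2).mpr hyA
        rw [hcc] at this
        exact this
    have sum0 : ∑ y : {x // x ∈ F}, l y * (∑ i, cc i * φ i y.1) = 0 := by
      have : ∀ y : {x // x ∈ F}, l y * (∑ i, cc i * φ i y.1)
          = ∑ i, cc i * (l y * φ i y.1) := by
        intro y; rw [Finset.mul_sum]; exact Finset.sum_congr rfl fun i _ => by ring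
      rw [Finset.sum_congr rfl fun y _ => this y, Finset.sum_comm]
      have : ∀ i, ∑ y : {x // x ∈ F}, cc i * (l y * φ i y.1) = cc i * T l i := by
        intro i; rw [← Finset.mul_sum]; rfl
      rw [Finset.sum_congr rfl fun i _ => this i, hTl]
      simp
    have sumpos : 0 < ∑ y : {x // x ∈ F}, l y * (∑ i, cc i * φ i y.1) := by
      apply Finset.sum_pos'
      · intro y _
        by_cases h : 0 < l y
        · exact le_of_lt (mul_pos h ((hiff y).mpr h))
        · push_neg at h
          have h2 : ∑ i, cc i * φ i y.1 ≤ 0 :=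
            not_lt.mp fun hh => absurd ((hiff y).mp hh) (not_lt.mpr h)
          nlinarith
      · exact ⟨y₀, Finset.mem_univ _, mul_pos hy₀ ((hiff y₀).mpr hy₀)⟩
    linarith
  obtain ⟨y, hy⟩ := Function.ne_iff.mp hlne
  rcases hy.lt_or_gt with h | h
  · exact key (-l) (by rw [map_neg, hl0, neg_zero]) ⟨y, by simpa using h⟩
  · exact key l hl0 ⟨y, h⟩

/-- Constant coefficient for the level set `{u < ψ(√(e^β/e^α))}`. -/
def coefC (u : ℝ) : ℝ :=
  if 1 ≤ u then 0 else if u ≤ -1 then 1 else -2 * Real.log ((1 + u) / (1 - u))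

/-- Linear coefficient for the level set `{u < ψ(√(e^β/e^α))}`. -/
def coefD (u : ℝ) : ℝ := if 1 ≤ u then 0 else if u ≤ -1 then 0 else 1

lemma psi_exp_lt_iff (u α β : ℝ) :
    u < psiR (Real.exp α) (Real.exp β) ↔ 0 < coefC u + coefD u * (β - α) := by
  have hs : Real.sqrt (Real.exp β / Real.exp α) = Real.exp ((β - α) / 2) := by
    rw [← Real.exp_sub]
    rw [show Real.exp (β - α) = Real.exp ((β - α) / 2) ^ 2 by
      rw [← Real.exp_nat_mul]; norm_num; ring]
    exact Real.sqrt_sq (Real.exp_pos _).le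
  rw [psiR, if_neg (Real.exp_ne_zero α), hs]
  set s := Real.exp ((β - α) / 2) with hsdef
  have hspos : 0 < s := Real.exp_pos _
  rw [lt_div_iff₀ (by linarith : (0:ℝ) < s + 1)]
  unfold coefC coefD
  by_cases h1 : 1 ≤ u
  · rw [if_pos h1, if_pos h1]
    constructor
    · intro h; nlinarith
    · intro h; norm_num at h
  · rw [if_neg h1, if_neg h1]
    push_neg at h1
    by_cases h2 : u ≤ -1
    · rw [if_pos h2, if_pos h2]
      constructor
      · intro _; norm_num
      · intro _; nlinarith
    · rw [if_neg h2, if_neg h2]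
      push_neg at h2
      have hv : 0 < (1 + u) / (1 - u) := div_pos (by linarith) (by linarith)
      constructor
      · intro h
        have hsv : (1 + u) / (1 - u) < s := by
          rw [div_lt_iff₀ (by linarith : (0:ℝ) < 1 - u)]; nlinarith
        have := Real.log_lt_log hv hsv
        rw [hsdef, Real.log_exp] at this
        linarith
      · intro h
        have hlog : Real.log ((1 + u) / (1 - u)) < (β - α) / 2 := by linarith
        have := Real.exp_lt_exp.mpr hlog
        rw [Real.exp_log hv, ← hsdef] at this
        rw [div_lt_iff₀ (by linarith : (0:ℝ) < 1 - u)] at this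
        nlinarith


/-- The functions `1, g₁, …, g_J`. -/
def consFun {𝒳 : Type*} {J : ℕ} (g : Fin J → 𝒳 → ℝ) : Fin (J + 1) → 𝒳 → ℝ :=
  Fin.cons (fun _ => (1:ℝ)) g

/-- The coefficients `(coefC u, coefD u · (θ'ⱼ − θⱼ))`. -/
def consCoef {J : ℕ} (u : ℝ) (θ θ' : Fin J → ℝ) : Fin (J + 1) → ℝ :=
  Fin.cons (coefC u) (fun j => coefD u * (θ' j - θ j))

lemma vcdimLE_mono {𝒴 : Type*} {C : Set (Set 𝒴)} {d d' : ℕ}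
    (h : VCdimLE C d) (hd : d ≤ d') : VCdimLE C d' :=
  fun F hF => le_trans (h F hF) hd

lemma sum_cons_eval {𝒳 : Type*} {J : ℕ} (g : Fin J → 𝒳 → ℝ) (u : ℝ)
    (θ θ' : Fin J → ℝ) (y : 𝒳) :
    ∑ m : Fin (J + 1), consCoef u θ θ' m * consFun g m y
      = coefC u + coefD u * ((∑ j, θ' j * g j y) - ∑ j, θ j * g j y) := by
  rw [Fin.sum_univ_succ]
  simp only [consCoef, consFun, Fin.cons_zero, Fin.cons_succ]
  rw [mul_one, ← Finset.sum_sub_distrib, Finset.mul_sum]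
  congr 1
  exact Finset.sum_congr rfl fun j _ => by ring

theorem statement_7
    {𝒳 : Type*} [MeasurableSpace 𝒳] (μ : Measure 𝒳)
    (J : ℕ) (hJ : 1 ≤ J) (g : Fin J → 𝒳 → ℝ) :
    -- (i) exponential models
    (∀ S0 : Set (𝒳 → ℝ), (∀ t ∈ S0, IsDensity1 μ t) →
      (∀ t ∈ S0, ∃ θ : Fin J → ℝ, t = fun x => Real.exp (∑ j, θ j * g j x)) →
      WeakVCMajorLE
        {f : 𝒳 → ℝ | ∃ t ∈ S0, ∃ t' ∈ S0, f = fun x => psiR (t x) (t' x)} (J + 1)) ∧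
    -- (ii) piecewise exponential models on a fixed partition 𝒥 = (I₁,…,I_k) of 𝒳
    (∀ k : ℕ, ∀ I : Fin k → Set 𝒳,
      Pairwise (Function.onFun Disjoint I) → (⋃ i, I i) = Set.univ →
      ∀ S0 : Set (𝒳 → ℝ), (∀ t ∈ S0, IsDensity1 μ t) →
      (∀ t ∈ S0, ∃ θ : Fin k → Fin J → ℝ,
        t = fun x => ∑ i, if x ∈ I i then Real.exp (∑ j, θ i j * g j x) else 0) →
      WeakVCMajorLE
        {f : 𝒳 → ℝ | ∃ t ∈ S0, ∃ t' ∈ S0, f = fun x => psiR (t x) (t' x)} (k * (J + 2))) := by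
  constructor
  · -- (i)
    intro S0 _ hform u
    have key := vc_linear (ι := Fin (J + 1)) (consFun g)
      {B | ∃ f ∈ {f : 𝒳 → ℝ | ∃ t ∈ S0, ∃ t' ∈ S0, f = fun x => psiR (t x) (t' x)},
        B = {y | u < f y}} ?_
    · simpa using key
    · rintro B ⟨f, ⟨t, ht0, t', ht'0, rfl⟩, rfl⟩
      obtain ⟨θ, rfl⟩ := hform t ht0
      obtain ⟨θ', rfl⟩ := hform t' ht'0
      refine ⟨consCoef u θ θ', ?_⟩
      ext y
      simp only [Set.mem_setOf_eq]
      rw [psi_exp_lt_iff, sum_cons_eval]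
  · -- (ii)
    intro k I hdisj hcover S0 _ hform u
    have key := vc_linear (ι := Fin k × Fin (J + 1))
      (fun p y => if y ∈ I p.1 then consFun g p.2 y else 0)
      {B | ∃ f ∈ {f : 𝒳 → ℝ | ∃ t ∈ S0, ∃ t' ∈ S0, f = fun x => psiR (t x) (t' x)},
        B = {y | u < f y}} ?_
    · refine vcdimLE_mono key ?_
      simp only [Fintype.card_prod, Fintype.card_fin]
      exact Nat.mul_le_mul_left k (by omega)
    · rintro B ⟨f, ⟨t, ht0, t', ht'0, rfl⟩, rfl⟩
      obtain ⟨θ, rfl⟩ := hform t ht0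
      obtain ⟨θ', rfl⟩ := hform t' ht'0
      refine ⟨fun p => consCoef u (θ p.1) (θ' p.1) p.2, ?_⟩
      ext y
      obtain ⟨i, hi⟩ : ∃ i, y ∈ I i := by
        have : y ∈ ⋃ i, I i := hcover ▸ Set.mem_univ y
        simpa [Set.mem_iUnion] using this
      have hval : ∀ ϑ : Fin k → Fin J → ℝ,
          (∑ i', if y ∈ I i' then Real.exp (∑ j, ϑ i' j * g j y) else 0)
            = Real.exp (∑ j, ϑ i j * g j y) := by
        intro ϑ
        rw [Finset.sum_eq_single_of_mem i (Finset.mem_univ i)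
          (fun i' _ hne => if_neg (fun hy' => Set.disjoint_left.mp (hdisj hne) hy' hi)),
          if_pos hi]
      have hsum : ∑ p : Fin k × Fin (J + 1),
          consCoef u (θ p.1) (θ' p.1) p.2
            * (if y ∈ I p.1 then consFun g p.2 y else 0)
          = coefC u + coefD u * ((∑ j, θ' i j * g j y) - ∑ j, θ i j * g j y) := by
        rw [Fintype.sum_prod_type]
        rw [Finset.sum_eq_single_of_mem i (Finset.mem_univ i)
          (fun i' _ hne => by
            have : y ∉ I i' := fun hy' => Set.disjoint_left.mp (hdisj hne) hy' hi
            simp [if_neg this])]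
        simp only [if_pos hi]
        exact sum_cons_eval g u (θ i) (θ' i) y
      simp only [Set.mem_setOf_eq]
      rw [hval θ, hval θ', psi_exp_lt_iff, hsum]
  end
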